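/- For every n ∈ ℕ and every j ∈ {1, …, D−1}, the auxiliary polynomial R_n^{(j)} satisfies 2n ≤ deg R_n^{(j)} ≤ 2n+D−2. -/

import Mathlib

open Polynomial MeasureTheory

/-- The integral of `f` over the contour `Γ_k`:
`∫_{Γ_k} f(z) dz = ∫_0^∞ f(t) dt − ω^k ∫_0^∞ f(t ω^k) dt` with `ω = e^{2πi/D}`. -/
noncomputable def gammaInt (D k : ℕ) (f : ℂ → ℂ) : ℂ :=
  (∫ t in Set.Ioi (0 : ℝ), f t) -
    Complex.exp (2 * Real.pi * Complex.I * k / D) *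
      ∫ t in Set.Ioi (0 : ℝ), f (t * Complex.exp (2 * Real.pi * Complex.I * k / D))

/-- The linear functional `α_i(P) = ∫_ℝ x^i P(x) e^{−2V(x)} dx`. -/
noncomputable def alphaF (V : Polynomial ℝ) (i : ℕ) (P : Polynomial ℂ) : ℂ :=
  ∫ x : ℝ, (x : ℂ) ^ i * P.eval (x : ℂ) * (Real.exp (-2 * V.eval x) : ℂ)

/-- The linear functional `β_k(P) = −(1/(2πi)) ∫_{Γ_k} P(z) e^{−V(z)} dz`. -/
noncomputable def betaF (V : Polynomial ℝ) (D k : ℕ) (P : Polynomial ℂ) : ℂ :=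
  -(1 / (2 * Real.pi * Complex.I)) *
    gammaInt D k (fun z => P.eval z * Complex.exp (-(V.map (algebraMap ℝ ℂ)).eval z))

section AuxLemmas
open Filter

lemma exists_bound_poly (V : Polynomial ℝ) (hd : V.natDegree ≠ 0) (he : Even V.natDegree)
    (hl : 0 < V.leadingCoeff) :
    ∃ K : ℝ, ∀ x : ℝ, V.leadingCoeff * x ^ 2 - 2 * V.eval x ≤ K := by
  set D := V.natDegree with hD
  set γ := V.leadingCoeff with hγ
  set W : Polynomial ℝ := C 2 * V - C γ * X ^ 2 with hW
  have hV0 : V ≠ 0 := leadingCoeff_ne_zero.mp (ne_of_gt hl)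
  have h2D : 2 ≤ D := by rcases he with ⟨k, hk⟩; omega
  have hcoeffpos : 0 < W.coeff D := by
    rw [hW, coeff_sub, coeff_C_mul, coeff_C_mul, coeff_X_pow, coeff_natDegree]
    rcases eq_or_ne D 2 with h2 | h2
    · rw [if_pos h2]; have : (0:ℝ) < γ := hl; simp only [hγ] at *; linarith
    · rw [if_neg h2]; simpa using hl
  have hWd_le : W.natDegree ≤ D := by
    refine le_trans (natDegree_sub_le _ _) (max_le ?_ ?_)
    · exact le_trans (natDegree_C_mul_le _ _) le_rfl
    · exact le_trans (natDegree_C_mul_le _ _) (by simpa [natDegree_X_pow] using h2D)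
  have hW0 : W ≠ 0 := fun h => by rw [h] at hcoeffpos; simp at hcoeffpos
  have hWd : W.natDegree = D := le_antisymm hWd_le (le_natDegree_of_ne_zero (ne_of_gt hcoeffpos))
  have hWlead : 0 < W.leadingCoeff := by rwa [leadingCoeff, hWd]
  have hWdeg : 0 < W.degree := by
    rw [degree_eq_natDegree hW0, hWd]; exact_mod_cast Nat.pos_of_ne_zero hd
  -- tendsto atTop
  have htop : Tendsto (fun x => W.eval x) atTop atTop :=
    W.tendsto_atTop_of_leadingCoeff_nonneg hWdeg hWlead.le
  -- tendsto atBot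
  have hbot : Tendsto (fun x => W.eval x) atBot atTop := by
    set W' := W.comp (-X) with hW'
    have hXd : (-X : Polynomial ℝ).natDegree = 1 := by simp
    have hW'd : W'.natDegree = D := by rw [hW', natDegree_comp, hXd, mul_one, hWd]
    have hW'0 : W' ≠ 0 := fun h => by
      have := hW'd; rw [h] at this; simp [hD] at this; omega
    have hW'lead : 0 < W'.leadingCoeff := by
      rw [hW', leadingCoeff_comp (by rw [hXd]; norm_num)]
      have : (-X : Polynomial ℝ).leadingCoeff = -1 := by simp
      rw [this, hWd, he.neg_one_pow, mul_one]; exact hWlead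
    have hW'deg : 0 < W'.degree := by
      rw [degree_eq_natDegree hW'0, hW'd]; exact_mod_cast Nat.pos_of_ne_zero hd
    have h1 : Tendsto (fun x => W'.eval x) atTop atTop :=
      W'.tendsto_atTop_of_leadingCoeff_nonneg hW'deg hW'lead.le
    have h2 : Tendsto (fun x : ℝ => W.eval (-x)) atTop atTop := by
      simpa [hW', eval_comp] using h1
    have h3 := h2.comp tendsto_neg_atBot_atTop
    have : ((fun x => W.eval (-x)) ∘ Neg.neg) = fun x => W.eval x := by
      funext x; simp [Function.comp]
    rwa [this] at h3
  obtain ⟨a, ha⟩ := (htop.eventually_ge_atTop 0).exists_forall_of_atTop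
  obtain ⟨b, hb⟩ := (hbot.eventually_ge_atTop 0).exists_forall_of_atBot
  have hWeval : ∀ x : ℝ, W.eval x = 2 * V.eval x - γ * x ^ 2 := by
    intro x; simp [hW]
  have key : ∀ x : ℝ, x ∈ Set.Icc b a ∨ 0 ≤ W.eval x := by
    intro x
    rcases le_or_gt x a with h1 | h1
    · rcases le_or_gt b x with h2 | h2
      · exact Or.inl ⟨h2, h1⟩
      · exact Or.inr (hb x h2.le)
    · exact Or.inr (ha x h1.le)
  rcases Set.eq_empty_or_nonempty (Set.Icc b a) with hemp | hne
  · refine ⟨0, fun x => ?_⟩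
    rcases key x with h | h
    · rw [hemp] at h; exact absurd h (Set.notMem_empty x)
    · rw [hWeval] at h; linarith
  · obtain ⟨x₀, _, hx₀⟩ := isCompact_Icc.exists_isMaxOn hne
      ((W.continuous.neg).continuousOn)
    refine ⟨max 0 (-W.eval x₀), fun x => ?_⟩
    rcases key x with h | h
    · have h1 : -W.eval x ≤ -W.eval x₀ := hx₀ h
      have h2 := le_max_right (0:ℝ) (-W.eval x₀)
      simp only [hWeval] at h1 h2 ⊢
      linarith
    · have h3 := le_max_left (0:ℝ) (-W.eval x₀)
      simp only [hWeval] at h h3 ⊢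
      linarith

lemma integrable_abs_pow_mul_exp (V : Polynomial ℝ) (hd : V.natDegree ≠ 0)
    (he : Even V.natDegree) (hl : 0 < V.leadingCoeff) (m : ℕ) :
    Integrable fun x : ℝ => |x| ^ m * Real.exp (-2 * V.eval x) := by
  obtain ⟨K, hK⟩ := exists_bound_poly V hd he hl
  set γ := V.leadingCoeff with hγ
  have hm : (-1 : ℝ) < (m : ℝ) := lt_of_lt_of_le neg_one_lt_zero (Nat.cast_nonneg m)
  have base : Integrable (fun x : ℝ => x ^ m * Real.exp (-γ * x ^ 2)) := by
    have := integrable_rpow_mul_exp_neg_mul_sq hl hm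
    simpa [Real.rpow_natCast] using this
  have base2 : Integrable (fun x : ℝ => Real.exp K * |x ^ m * Real.exp (-γ * x ^ 2)|) :=
    base.abs.const_mul _
  refine base2.mono' ?_ ?_
  · exact ((continuous_abs.pow m).mul ((continuous_const.mul V.continuous).rexp)).aestronglyMeasurable
  · refine Filter.Eventually.of_forall fun x => ?_
    have h1 : (0:ℝ) ≤ |x| ^ m * Real.exp (-2 * V.eval x) := by positivity
    rw [Real.norm_eq_abs, abs_of_nonneg h1, abs_mul, abs_pow, abs_of_nonneg (Real.exp_pos _).le]
    have h2 : Real.exp (-2 * V.eval x) ≤ Real.exp K * Real.exp (-γ * x ^ 2) := by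
      rw [← Real.exp_add]
      apply Real.exp_le_exp.mpr
      have := hK x
      linarith
    calc |x| ^ m * Real.exp (-2 * V.eval x) ≤ |x| ^ m * (Real.exp K * Real.exp (-γ * x ^ 2)) := by
          exact mul_le_mul_of_nonneg_left h2 (by positivity)
      _ = Real.exp K * (|x| ^ m * Real.exp (-γ * x ^ 2)) := by ring

lemma integrable_pow_mul_poly_mul_exp (V : Polynomial ℝ) (hd : V.natDegree ≠ 0)
    (he : Even V.natDegree) (hl : 0 < V.leadingCoeff) (i : ℕ) (Q : Polynomial ℂ) :
    Integrable fun x : ℝ =>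
      (x : ℂ) ^ i * Q.eval (x : ℂ) * (Real.exp (-2 * V.eval x) : ℂ) := by
  have hbnd : Integrable fun x : ℝ =>
      ∑ m ∈ Finset.range (Q.natDegree + 1),
        ‖Q.coeff m‖ * (|x| ^ (i + m) * Real.exp (-2 * V.eval x)) := by
    apply MeasureTheory.integrable_finset_sum
    intro m _
    exact (integrable_abs_pow_mul_exp V hd he hl (i + m)).const_mul _
  refine hbnd.mono' ?_ ?_
  · apply Continuous.aestronglyMeasurable
    apply Continuous.mul
    · apply Continuous.mul
      · exact (Complex.continuous_ofReal.pow i)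
      · exact Q.continuous_aeval.comp Complex.continuous_ofReal
    · exact Complex.continuous_ofReal.comp (continuous_const.mul V.continuous).rexp
  · refine Filter.Eventually.of_forall fun x => ?_
    have hQ : ‖Q.eval (x : ℂ)‖ ≤ ∑ m ∈ Finset.range (Q.natDegree + 1), ‖Q.coeff m‖ * |x| ^ m := by
      conv_lhs => rw [Q.eval_eq_sum_range]
      refine (norm_sum_le _ _).trans ?_
      apply Finset.sum_le_sum
      intro m _
      rw [norm_mul, norm_pow, Complex.norm_real, Real.norm_eq_abs]
    have hnorm : ‖(x : ℂ) ^ i * Q.eval (x : ℂ) * (Real.exp (-2 * V.eval x) : ℂ)‖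
        = |x| ^ i * ‖Q.eval (x : ℂ)‖ * Real.exp (-2 * V.eval x) := by
      rw [norm_mul, norm_mul, norm_pow, Complex.norm_real, Real.norm_eq_abs,
        Complex.norm_real, Real.norm_eq_abs, abs_of_nonneg (Real.exp_pos _).le]
    rw [hnorm]
    calc |x| ^ i * ‖Q.eval (x:ℂ)‖ * Real.exp (-2 * V.eval x)
        ≤ |x| ^ i * (∑ m ∈ Finset.range (Q.natDegree + 1), ‖Q.coeff m‖ * |x| ^ m) *
            Real.exp (-2 * V.eval x) := by
          apply mul_le_mul_of_nonneg_right (mul_le_mul_of_nonneg_left hQ (by positivity))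
            (Real.exp_pos _).le
      _ = ∑ m ∈ Finset.range (Q.natDegree + 1),
            ‖Q.coeff m‖ * (|x| ^ (i + m) * Real.exp (-2 * V.eval x)) := by
          rw [Finset.mul_sum, Finset.sum_mul]
          apply Finset.sum_congr rfl
          intro m _
          rw [pow_add]
          ring

end AuxLemmas

/-- The auxiliary polynomial `R_n^{(j)}` satisfies `2n ≤ deg R_n^{(j)} ≤ 2n+D−2`. -/
theorem auxiliary_poly_degree_bounds
    (D : ℕ) (hD : 2 ≤ D) (hDeven : Even D)
    (V : Polynomial ℝ) (hVdeg : V.natDegree = D) (hVlead : 0 < V.leadingCoeff)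
    (n j : ℕ) (hj1 : 1 ≤ j) (hj2 : j ≤ D - 1)
    (R : Polynomial ℂ)
    (hRdeg : R.natDegree ≤ 2 * n + D - 2)
    (hRα : ∀ i < 2 * n, alphaF V i R = 0)
    (hRβ : ∀ k, 1 ≤ k → k ≤ D - 1 → betaF V D k R = if k = j then 1 else 0) :
    2 * n ≤ R.natDegree ∧ R.natDegree ≤ 2 * n + D - 2 := by
  refine ⟨?_, hRdeg⟩
  by_contra hcon
  push_neg at hcon
  have hd : V.natDegree ≠ 0 := by omega
  have he : Even V.natDegree := hVdeg ▸ hDeven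
  set N := R.natDegree + 1 with hN
  have hint : ∀ i : ℕ, Integrable fun x : ℝ =>
      (x : ℂ) ^ i * R.eval (x : ℂ) * (Real.exp (-2 * V.eval x) : ℂ) :=
    fun i => integrable_pow_mul_poly_mul_exp V hd he hVlead i R
  have hsum : ∫ x : ℝ, (∑ i ∈ Finset.range N,
      (starRingEnd ℂ) (R.coeff i) *
        ((x : ℂ) ^ i * R.eval (x : ℂ) * (Real.exp (-2 * V.eval x) : ℂ))) = 0 := by
    rw [integral_finset_sum _ fun i _ => (hint i).const_mul _]
    apply Finset.sum_eq_zero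
    intro i hi
    rw [MeasureTheory.integral_const_mul]
    have h0 := hRα i (lt_of_lt_of_le (Finset.mem_range.mp hi) (by omega))
    rw [alphaF] at h0
    rw [h0, mul_zero]
  have hfun : ∀ x : ℝ, (∑ i ∈ Finset.range N,
      (starRingEnd ℂ) (R.coeff i) *
        ((x : ℂ) ^ i * R.eval (x : ℂ) * (Real.exp (-2 * V.eval x) : ℂ)))
      = ((Complex.normSq (R.eval (x : ℂ)) * Real.exp (-2 * V.eval x) : ℝ) : ℂ) := by
    intro x
    have hconj : (starRingEnd ℂ) (R.eval (x : ℂ))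
        = ∑ i ∈ Finset.range N, (starRingEnd ℂ) (R.coeff i) * (x : ℂ) ^ i := by
      conv_lhs => rw [R.eval_eq_sum_range]
      rw [map_sum]
      apply Finset.sum_congr rfl
      intro i _
      rw [map_mul, map_pow, Complex.conj_ofReal]
    have step1 : (∑ i ∈ Finset.range N,
        (starRingEnd ℂ) (R.coeff i) *
          ((x : ℂ) ^ i * R.eval (x : ℂ) * (Real.exp (-2 * V.eval x) : ℂ)))
        = (∑ i ∈ Finset.range N, (starRingEnd ℂ) (R.coeff i) * (x : ℂ) ^ i) *
            (R.eval (x : ℂ) * (Real.exp (-2 * V.eval x) : ℂ)) := by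
      rw [Finset.sum_mul]
      exact Finset.sum_congr rfl fun i _ => by ring
    rw [step1, ← hconj, ← mul_assoc, mul_comm ((starRingEnd ℂ) (R.eval (x:ℂ))) (R.eval (x:ℂ)), Complex.mul_conj, Complex.ofReal_mul]
  have h2 := hsum
  simp only [hfun] at h2
  have h3 : ∫ x : ℝ, Complex.normSq (R.eval (x : ℂ)) * Real.exp (-2 * V.eval x) = 0 := by
    have h4 : ((∫ x : ℝ, Complex.normSq (R.eval (x : ℂ)) * Real.exp (-2 * V.eval x) : ℝ) : ℂ)
        = 0 := by
      rw [← h2]; exact (integral_ofReal (𝕜 := ℂ)).symm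
    exact_mod_cast h4
  have hfint : Integrable fun x : ℝ =>
      Complex.normSq (R.eval (x : ℂ)) * Real.exp (-2 * V.eval x) := by
    have hci : Integrable fun x : ℝ =>
        ((Complex.normSq (R.eval (x : ℂ)) * Real.exp (-2 * V.eval x) : ℝ) : ℂ) :=
      (MeasureTheory.integrable_finset_sum _ fun i _ => (hint i).const_mul _).congr
        (Filter.Eventually.of_forall hfun)
    refine hci.re.congr (Filter.Eventually.of_forall fun x => ?_)
    exact Complex.ofReal_re _
  have hae : (fun x : ℝ => Complex.normSq (R.eval (x : ℂ)) * Real.exp (-2 * V.eval x))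
      =ᵐ[volume] 0 :=
    (MeasureTheory.integral_eq_zero_iff_of_nonneg
      (fun x => mul_nonneg (Complex.normSq_nonneg _) (Real.exp_pos _).le) hfint).mp h3
  have hcont : Continuous fun x : ℝ =>
      Complex.normSq (R.eval (x : ℂ)) * Real.exp (-2 * V.eval x) := by
    apply Continuous.mul
    · exact Complex.continuous_normSq.comp (R.continuous_aeval.comp Complex.continuous_ofReal)
    · exact (continuous_const.mul V.continuous).rexp
  have heq := (hcont.ae_eq_iff_eq volume continuous_const).mp hae
  have hroot : ∀ x : ℝ, R.eval (x : ℂ) = 0 := by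
    intro x
    have hx : Complex.normSq (R.eval (x : ℂ)) * Real.exp (-2 * V.eval x) = 0 := by
      have h5 := congrFun heq x
      exact h5
    have hns : Complex.normSq (R.eval (x : ℂ)) = 0 := by
      rcases mul_eq_zero.mp hx with h | h
      · exact h
      · exact absurd h (Real.exp_ne_zero _)
    exact Complex.normSq_eq_zero.mp hns
  have hR0 : R = 0 :=
    R.eq_zero_of_infinite_isRoot
      (Set.infinite_of_injective_forall_mem (f := fun x : ℝ => (x : ℂ))
        Complex.ofReal_injective (fun x => hroot x))
  have hβ := hRβ j hj1 hj2
  rw [if_pos rfl, hR0] at hβ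
  simp [betaF, gammaInt] at hβ
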